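/- Let p be a prime and r ≥ 1. With F(x,y) = x₁y₁²+x₂y₂²+x₃y₃², the exponential sum satisfies S_{p^r}(m,n) = (p^{4r}/φ(p^r))·(N₀(p^r) − p^{-1}N₁(p^r)), where for j ∈ {0,1}, N_j(p^r) is the number of tuples (a, y₁, y₂, y₃) ∈ (ℤ/p^rℤ)⁴ with p ∤ a, n·y ≡ 0 mod p^{r−j}, and a·yᵢ² + mᵢ ≡ 0 mod p^r for i = 1,2,3. -/

import Mathlib

/-!
Summing out `x` by orthogonality turns `S_q(m,n)` into `q³ Σ e_q(n·y)`, the sum running over the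
solutions `(a, y)` of `a yᵢ² + mᵢ ≡ 0` with `a` a unit. The substitution `(a, y) ↦ (a v⁻², v y)`
permutes these solutions for every unit `v`, so the sum may be averaged over `v`; this replaces
each `e_q(n·y)` by the Ramanujan sum `c_q(n·y) / φ(q)`. For `q = p^r` one has
`c_q(t) = p^r [p^r ∣ t] - p^(r-1) [p^(r-1) ∣ t]`, and summing this over the solutions gives
`p^r N₀ - p^(r-1) N₁`.
-/

/-- e_q(t) = exp(2πit/q). -/
noncomputable def eChar (q : ℕ) (t : ℤ) : ℂ :=
  Complex.exp (2 * Real.pi * Complex.I * (t : ℂ) / (q : ℂ))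

/-- The complete exponential sum S_q(m,n) for F(x,y) = x₁y₁² + x₂y₂² + x₃y₃²:
S_q(m,n) = Σ*_{a mod q} Σ_{x,y mod q} e_q(aF(x,y) + m·x + n·y). -/
noncomputable def expSum (q : ℕ) (m₁ m₂ m₃ n₁ n₂ n₃ : ℤ) : ℂ :=
  ∑ a ∈ (Finset.range q).filter (fun a => Nat.Coprime a q),
    ∑ x₁ ∈ Finset.range q, ∑ x₂ ∈ Finset.range q, ∑ x₃ ∈ Finset.range q,
      ∑ y₁ ∈ Finset.range q, ∑ y₂ ∈ Finset.range q, ∑ y₃ ∈ Finset.range q,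
        eChar q ((a : ℤ) * ((x₁ : ℤ) * (y₁ : ℤ) ^ 2 + (x₂ : ℤ) * (y₂ : ℤ) ^ 2
            + (x₃ : ℤ) * (y₃ : ℤ) ^ 2)
          + m₁ * (x₁ : ℤ) + m₂ * (x₂ : ℤ) + m₃ * (x₃ : ℤ)
          + n₁ * (y₁ : ℤ) + n₂ * (y₂ : ℤ) + n₃ * (y₃ : ℤ))

/-- N_j(p^r): the number of (a, y₁, y₂, y₃) ∈ (ℤ/p^rℤ)⁴ with p ∤ a,
n·y ≡ 0 mod p^{r−j}, and a·yᵢ² + mᵢ ≡ 0 mod p^r for i = 1, 2, 3. -/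
def Ncount (p r j : ℕ) (m₁ m₂ m₃ n₁ n₂ n₃ : ℤ) : ℕ :=
  ((Finset.range (p ^ r) ×ˢ Finset.range (p ^ r) ×ˢ Finset.range (p ^ r)
      ×ˢ Finset.range (p ^ r)).filter
    (fun t => ¬ p ∣ t.1 ∧
      (n₁ * (t.2.1 : ℤ) + n₂ * (t.2.2.1 : ℤ) + n₃ * (t.2.2.2 : ℤ)) % ((p : ℤ) ^ (r - j)) = 0 ∧
      ((t.1 : ℤ) * (t.2.1 : ℤ) ^ 2 + m₁) % ((p : ℤ) ^ r) = 0 ∧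
      ((t.1 : ℤ) * (t.2.2.1 : ℤ) ^ 2 + m₂) % ((p : ℤ) ^ r) = 0 ∧
      ((t.1 : ℤ) * (t.2.2.2 : ℤ) ^ 2 + m₃) % ((p : ℤ) ^ r) = 0)).card

open Finset

section Character

variable {q : ℕ}

lemma eChar_eq_stdAddChar [NeZero q] (t : ℤ) : eChar q t = ZMod.stdAddChar (t : ZMod q) := by
  rw [ZMod.stdAddChar_coe]
  rfl

lemma eChar_add (s t : ℤ) : eChar q (s + t) = eChar q s * eChar q t := by
  simp only [eChar, ← Complex.exp_add]
  congr 1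
  push_cast
  ring

lemma eChar_mul_mul {d : ℕ} (hd : d ≠ 0) (t : ℤ) :
    eChar (d * q) (d * t) = eChar q t := by
  unfold eChar
  congr 1
  push_cast
  field_simp

lemma sum_range_eq_sum_val [NeZero q] {M : Type*} [AddCommMonoid M] (f : ℕ → M) :
    ∑ x ∈ range q, f x = ∑ x : ZMod q, f x.val :=
  sum_nbij' (fun x => (x : ZMod q)) ZMod.val (by simp) (by simp [ZMod.val_lt])
    (fun x hx => ZMod.val_cast_of_lt (mem_range.mp hx)) (by simp)
    (fun x hx => by rw [ZMod.val_cast_of_lt (mem_range.mp hx)])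

lemma sum_range_eChar_mul [NeZero q] (t : ℤ) :
    ∑ x ∈ range q, eChar q (x * t) = if (q : ℤ) ∣ t then (q : ℂ) else 0 := by
  rw [sum_range_eq_sum_val]
  simp only [eChar_eq_stdAddChar, Int.cast_mul, Int.cast_natCast, ZMod.natCast_zmod_val]
  rw [AddChar.sum_mulShift _ (ZMod.isPrimitive_stdAddChar q), ZMod.card]
  simp only [ZMod.intCast_zmod_eq_zero_iff_dvd]
  split_ifs <;> simp

lemma sum_range_eChar_linear [NeZero q] (c₁ c₂ c₃ d : ℤ) :
    ∑ x₁ ∈ range q, ∑ x₂ ∈ range q, ∑ x₃ ∈ range q,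
        eChar q (x₁ * c₁ + x₂ * c₂ + x₃ * c₃ + d)
      = if (q : ℤ) ∣ c₁ ∧ (q : ℤ) ∣ c₂ ∧ (q : ℤ) ∣ c₃ then (q : ℂ) ^ 3 * eChar q d else 0 := by
  simp only [eChar_add, ← sum_mul, ← mul_sum, sum_range_eChar_mul]
  split_ifs <;> simp_all [pow_three, mul_assoc]

end Character

noncomputable def ramanujanSum (q : ℕ) (t : ℤ) : ℂ :=
  ∑ u ∈ range q with u.Coprime q, eChar q (u * t)

lemma range_filter_dvd_eq_map {p : ℕ} (hp : p ≠ 0) (N : ℕ) :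
    {u ∈ range (p * N) | p ∣ u} = (range N).map ⟨(p * ·), mul_right_injective₀ hp⟩ := by
  ext u
  simp only [mem_filter, mem_range, mem_map, Function.Embedding.coeFn_mk]
  constructor
  · rintro ⟨hu, w, rfl⟩
    exact ⟨w, lt_of_mul_lt_mul_left hu (Nat.zero_le p), rfl⟩
  · rintro ⟨w, hw, rfl⟩
    exact ⟨Nat.mul_lt_mul_of_pos_left hw (Nat.pos_of_ne_zero hp), dvd_mul_right p w⟩

lemma ramanujanSum_prime_pow {p : ℕ} [Fact p.Prime] (s : ℕ) (t : ℤ) :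
    ramanujanSum (p ^ (s + 1)) t
      = (if (p : ℤ) ^ (s + 1) ∣ t then (p : ℂ) ^ (s + 1) else 0)
        - (if (p : ℤ) ^ s ∣ t then (p : ℂ) ^ s else 0) := by
  have hp : p.Prime := Fact.out
  have hcoprime : ∀ u, u.Coprime (p ^ (s + 1)) ↔ ¬ p ∣ u := fun u => by
    rw [Nat.coprime_pow_right_iff s.succ_pos, Nat.coprime_comm, hp.coprime_iff_not_dvd]
  have hmultiples : ∑ u ∈ range (p ^ (s + 1)) with p ∣ u, eChar (p ^ (s + 1)) (u * t)
      = ∑ w ∈ range (p ^ s), eChar (p ^ s) (w * t) := by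
    rw [pow_succ', range_filter_dvd_eq_map hp.ne_zero, sum_map]
    refine sum_congr rfl fun w _ => ?_
    rw [Function.Embedding.coeFn_mk, ← eChar_mul_mul (q := p ^ s) hp.ne_zero (w * t)]
    congr 1
    push_cast
    ring
  have hsplit := sum_filter_not_add_sum_filter (range (p ^ (s + 1))) (p ∣ ·)
    fun u => eChar (p ^ (s + 1)) (u * t)
  rw [hmultiples, sum_range_eChar_mul, sum_range_eChar_mul] at hsplit
  push_cast at hsplit
  rw [ramanujanSum, filter_congr fun u _ => hcoprime u]
  linear_combination hsplit

lemma sum_comm₃ {α β M : Type*} [AddCommMonoid M] (s : Finset α) (t : Finset β)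
    (f : α → α → α → β → β → β → M) :
    ∑ x₁ ∈ s, ∑ x₂ ∈ s, ∑ x₃ ∈ s, ∑ y₁ ∈ t, ∑ y₂ ∈ t, ∑ y₃ ∈ t, f x₁ x₂ x₃ y₁ y₂ y₃
      = ∑ y₁ ∈ t, ∑ y₂ ∈ t, ∑ y₃ ∈ t, ∑ x₁ ∈ s, ∑ x₂ ∈ s, ∑ x₃ ∈ s, f x₁ x₂ x₃ y₁ y₂ y₃ :=
  calc _ = ∑ x ∈ s ×ˢ s ×ˢ s, ∑ y ∈ t ×ˢ t ×ˢ t, f x.1 x.2.1 x.2.2 y.1 y.2.1 y.2.2 := by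
        simp only [sum_product]
    _ = ∑ y ∈ t ×ˢ t ×ˢ t, ∑ x ∈ s ×ˢ s ×ˢ s, f x.1 x.2.1 x.2.2 y.1 y.2.1 y.2.2 := sum_comm
    _ = _ := by simp only [sum_product]

section Solutions

variable (q : ℕ) [NeZero q]

def quadraticSolutions (m₁ m₂ m₃ : ℤ) : Finset (ZMod q × ZMod q × ZMod q × ZMod q) :=
  {t | IsUnit t.1 ∧ t.1 * t.2.1 ^ 2 + m₁ = 0 ∧ t.1 * t.2.2.1 ^ 2 + m₂ = 0
    ∧ t.1 * t.2.2.2 ^ 2 + m₃ = 0}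

variable {q}

/-- `n·y` for `t = (a, y)`, computed on the representatives `0 ≤ yᵢ < q`. -/
def dotY (n₁ n₂ n₃ : ℤ) (t : ZMod q × ZMod q × ZMod q × ZMod q) : ℤ :=
  n₁ * t.2.1.val + n₂ * t.2.2.1.val + n₃ * t.2.2.2.val

lemma isUnit_iff_coprime_val (a : ZMod q) : IsUnit a ↔ a.val.Coprime q := by
  rw [← ZMod.isUnit_iff_coprime, ZMod.natCast_zmod_val]

lemma mul_sq_add_eq_zero_iff_dvd (a y : ZMod q) (m : ℤ) :
    a * y ^ 2 + m = 0 ↔ (q : ℤ) ∣ a.val * y.val ^ 2 + m := by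
  rw [← ZMod.intCast_zmod_eq_zero_iff_dvd]
  push_cast [ZMod.natCast_zmod_val]
  rfl

lemma expSum_eq_mul_sum_quadraticSolutions (m₁ m₂ m₃ n₁ n₂ n₃ : ℤ) :
    expSum q m₁ m₂ m₃ n₁ n₂ n₃
      = (q : ℂ) ^ 3 * ∑ t ∈ quadraticSolutions q m₁ m₂ m₃, eChar q (dotY n₁ n₂ n₃ t) := by
  have hx : ∀ a : ℕ, ∑ x₁ ∈ range q, ∑ x₂ ∈ range q, ∑ x₃ ∈ range q,
      ∑ y₁ ∈ range q, ∑ y₂ ∈ range q, ∑ y₃ ∈ range q,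
        eChar q ((a : ℤ) * ((x₁ : ℤ) * (y₁ : ℤ) ^ 2 + (x₂ : ℤ) * (y₂ : ℤ) ^ 2
            + (x₃ : ℤ) * (y₃ : ℤ) ^ 2)
          + m₁ * x₁ + m₂ * x₂ + m₃ * x₃ + n₁ * y₁ + n₂ * y₂ + n₃ * y₃)
      = ∑ y₁ ∈ range q, ∑ y₂ ∈ range q, ∑ y₃ ∈ range q,
          if (q : ℤ) ∣ a * y₁ ^ 2 + m₁ ∧ (q : ℤ) ∣ a * y₂ ^ 2 + m₂ ∧ (q : ℤ) ∣ a * y₃ ^ 2 + m₃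
          then (q : ℂ) ^ 3 * eChar q (n₁ * y₁ + n₂ * y₂ + n₃ * y₃) else 0 := fun a => by
    rw [sum_comm₃]
    refine sum_congr rfl fun y₁ _ => sum_congr rfl fun y₂ _ => sum_congr rfl fun y₃ _ => ?_
    rw [← sum_range_eChar_linear]
    refine sum_congr rfl fun x₁ _ => sum_congr rfl fun x₂ _ => sum_congr rfl fun x₃ _ => ?_
    congr 1
    ring
  rw [expSum, sum_filter, quadraticSolutions, sum_filter, mul_sum]
  simp_rw [hx, sum_range_eq_sum_val, Fintype.sum_prod_type, isUnit_iff_coprime_val,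
    mul_sq_add_eq_zero_iff_dvd, ite_and, ite_sum_zero, mul_ite, mul_zero, dotY]

def unitScaling (v : (ZMod q)ˣ) :
    ZMod q × ZMod q × ZMod q × ZMod q ≃ ZMod q × ZMod q × ZMod q × ZMod q :=
  (Units.mulRight (v⁻¹ ^ 2)).prodCongr
    ((Units.mulLeft v).prodCongr ((Units.mulLeft v).prodCongr (Units.mulLeft v)))

lemma unitScaling_mem_quadraticSolutions (v : (ZMod q)ˣ) (m₁ m₂ m₃ : ℤ)
    (t : ZMod q × ZMod q × ZMod q × ZMod q) :
    unitScaling v t ∈ quadraticSolutions q m₁ m₂ m₃ ↔ t ∈ quadraticSolutions q m₁ m₂ m₃ := by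
  have hscale : ∀ a y : ZMod q, a * ↑v⁻¹ ^ 2 * (↑v * y) ^ 2 = a * y ^ 2 := fun a y => by
    have hv : (↑v⁻¹ : ZMod q) * ↑v = 1 := Units.inv_mul v
    linear_combination (a * y ^ 2 * (↑v⁻¹ * ↑v + 1)) * hv
  simp [quadraticSolutions, unitScaling, hscale]

lemma sum_quadraticSolutions_eChar_mul {u : ℕ} (hu : u.Coprime q) (m₁ m₂ m₃ n₁ n₂ n₃ : ℤ) :
    ∑ t ∈ quadraticSolutions q m₁ m₂ m₃, eChar q (u * dotY n₁ n₂ n₃ t)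
      = ∑ t ∈ quadraticSolutions q m₁ m₂ m₃, eChar q (dotY n₁ n₂ n₃ t) := by
  refine sum_equiv (unitScaling (ZMod.unitOfCoprime u hu))
    (fun t => (unitScaling_mem_quadraticSolutions ..).symm) fun t _ => ?_
  simp only [unitScaling, Equiv.prodCongr_apply, Prod.map_fst, Prod.map_snd, Units.mulLeft_apply,
    ZMod.coe_unitOfCoprime, dotY, eChar_eq_stdAddChar]
  push_cast [ZMod.natCast_zmod_val]
  congr 1
  ring

lemma totient_mul_sum_quadraticSolutions (m₁ m₂ m₃ n₁ n₂ n₃ : ℤ) :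
    (q.totient : ℂ) * ∑ t ∈ quadraticSolutions q m₁ m₂ m₃, eChar q (dotY n₁ n₂ n₃ t)
      = ∑ t ∈ quadraticSolutions q m₁ m₂ m₃, ramanujanSum q (dotY n₁ n₂ n₃ t) := by
  have hcard : #{u ∈ range q | u.Coprime q} = q.totient := by
    simp_rw [Nat.totient_eq_card_coprime, Nat.coprime_comm]
  simp_rw [ramanujanSum, ← hcard, ← nsmul_eq_mul, ← sum_const,
    sum_comm (s := quadraticSolutions q _ _ _)]
  exact sum_congr rfl fun u hu => (sum_quadraticSolutions_eChar_mul (mem_filter.mp hu).2 ..).symm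

end Solutions

section PrimePower

variable {p : ℕ} [Fact p.Prime]

lemma Ncount_eq_card_quadraticSolutions {r : ℕ} (hr : r ≠ 0) (j : ℕ) (m₁ m₂ m₃ n₁ n₂ n₃ : ℤ) :
    Ncount p r j m₁ m₂ m₃ n₁ n₂ n₃
      = #{t ∈ quadraticSolutions (p ^ r) m₁ m₂ m₃ | (p : ℤ) ^ (r - j) ∣ dotY n₁ n₂ n₃ t} := by
  have hunit : ∀ a : ZMod (p ^ r), IsUnit a ↔ ¬ p ∣ a.val := fun a => by
    rw [isUnit_iff_coprime_val, Nat.coprime_pow_right_iff (Nat.pos_of_ne_zero hr),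
      Nat.coprime_comm, (Fact.out : p.Prime).coprime_iff_not_dvd]
  rw [Ncount, quadraticSolutions, filter_filter, card_filter, card_filter]
  simp_rw [← Int.dvd_iff_emod_eq_zero, sum_product, sum_range_eq_sum_val, Fintype.sum_prod_type,
    hunit, mul_sq_add_eq_zero_iff_dvd, Nat.cast_pow, dotY]
  refine sum_congr rfl fun a _ => sum_congr rfl fun y₁ _ => sum_congr rfl fun y₂ _ =>
    sum_congr rfl fun y₃ _ => ?_
  simp only [and_comm, and_left_comm]

lemma totient_mul_sum_quadraticSolutions_prime_pow (s : ℕ) (m₁ m₂ m₃ n₁ n₂ n₃ : ℤ) :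
    ((p ^ (s + 1)).totient : ℂ)
        * ∑ t ∈ quadraticSolutions (p ^ (s + 1)) m₁ m₂ m₃, eChar (p ^ (s + 1)) (dotY n₁ n₂ n₃ t)
      = (p : ℂ) ^ (s + 1) * Ncount p (s + 1) 0 m₁ m₂ m₃ n₁ n₂ n₃
        - (p : ℂ) ^ s * Ncount p (s + 1) 1 m₁ m₂ m₃ n₁ n₂ n₃ := by
  rw [totient_mul_sum_quadraticSolutions, Ncount_eq_card_quadraticSolutions s.add_one_ne_zero,
    Ncount_eq_card_quadraticSolutions s.add_one_ne_zero, Nat.sub_zero, Nat.add_sub_cancel]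
  simp_rw [ramanujanSum_prime_pow, sum_sub_distrib, ← sum_filter, sum_const, nsmul_eq_mul, mul_comm]

end PrimePower

/-- S_{p^r}(m,n) = (p^{4r}/φ(p^r))·(N₀(p^r) − p⁻¹N₁(p^r)). -/
theorem stmt14 (p : ℕ) (hp : p.Prime) (r : ℕ) (hr : 1 ≤ r) (m₁ m₂ m₃ n₁ n₂ n₃ : ℤ) :
    expSum (p ^ r) m₁ m₂ m₃ n₁ n₂ n₃
      = (p : ℂ) ^ (4 * r) / (Nat.totient (p ^ r) : ℂ)
        * ((Ncount p r 0 m₁ m₂ m₃ n₁ n₂ n₃ : ℂ)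
          - (Ncount p r 1 m₁ m₂ m₃ n₁ n₂ n₃ : ℂ) / (p : ℂ)) := by
  have := Fact.mk hp
  obtain ⟨s, rfl⟩ : ∃ s, r = s + 1 := ⟨r - 1, by omega⟩
  have hφ : ((p ^ (s + 1)).totient : ℂ) ≠ 0 := by
    exact_mod_cast (Nat.totient_pos.mpr (pow_pos hp.pos _)).ne'
  have hp0 : (p : ℂ) ≠ 0 := by exact_mod_cast hp.ne_zero
  rw [expSum_eq_mul_sum_quadraticSolutions, ← mul_div_cancel_left₀ (∑ _ ∈ _, _) hφ,
    totient_mul_sum_quadraticSolutions_prime_pow]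
  push_cast
  field_simp
  ring
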